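/- arXiv:2003.11835 — 5 statements merged into one kernel-verified Lean document; each statement's English description precedes it below -/
import Mathlib

section
/- Let n, m be positive integers with n ≤ m, let S : Fin n → ℕ be strictly increasing with S(i) < m for all i, and let ℓ = ⌈log₂(m/n)⌉. Define p(i) = ⌊S(i)/2^ℓ⌋ + i. Then p is strictly increasing and p(i) < 2n for all i. (Hence the Elias-Fano high-bits bitmap, which has a 1 at each position p(i), is well defined and fits in at most 2n bits.) -/
/-!
Since `ℓ ≥ log₂ (m / n)`, we have `m ≤ n * 2 ^ ℓ`, so every high part `S i / 2 ^ ℓ` is below `n`;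
adding the index `i < n` keeps the positions below `2 n`. The high parts are monotone and the
index is strictly increasing, so their sum is strictly increasing.
-/

theorem Nat.le_mul_pow_of_logb_le {b m n ℓ : ℕ} (hb : 1 < b) (hm : 0 < m) (hn : 0 < n)
    (h : Real.logb b ((m : ℝ) / n) ≤ ℓ) : m ≤ n * b ^ ℓ := by
  have hb' : (1 : ℝ) < b := by exact_mod_cast hb
  have hle := (Real.logb_le_iff_le_rpow hb' (by positivity)).1 h
  rw [Real.rpow_natCast, div_le_iff₀ (by exact_mod_cast hn), mul_comm] at hle
  exact_mod_cast hle

theorem Fin.strictMono_div_add_val {n d : ℕ} {S : Fin n → ℕ} (hS : Monotone S) :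
    StrictMono fun i : Fin n => S i / d + (i : ℕ) :=
  Monotone.add_strictMono (fun _ _ hij => Nat.div_le_div_right (hS hij)) Fin.val_strictMono

theorem Fin.div_add_val_lt_two_mul {n d : ℕ} {S : Fin n → ℕ} (hS : ∀ i, S i < n * d)
    (i : Fin n) : S i / d + (i : ℕ) < 2 * n := by
  have hhigh : S i / d < n := Nat.div_lt_of_lt_mul (by rw [mul_comm]; exact hS i)
  have := i.isLt
  omega

theorem eliasFano_bitmap_positions_general (n m : ℕ)
    (S : Fin n → ℕ) (hS : StrictMono S) (hSm : ∀ i, S i < m)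
    (ℓ : ℕ) (hℓ : (ℓ : ℤ) = ⌈Real.logb 2 ((m : ℝ) / n)⌉) :
    StrictMono (fun i : Fin n => S i / 2 ^ ℓ + (i : ℕ)) ∧
      ∀ i : Fin n, S i / 2 ^ ℓ + (i : ℕ) < 2 * n := by
  refine ⟨Fin.strictMono_div_add_val hS.monotone, Fin.div_add_val_lt_two_mul fun i => ?_⟩
  have hlog : Real.logb 2 ((m : ℝ) / n) ≤ ℓ := by
    exact_mod_cast hℓ ▸ Int.le_ceil _
  exact (hSm i).trans_le <|
    Nat.le_mul_pow_of_logb_le one_lt_two (Nat.zero_lt_of_lt (hSm i)) i.pos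
      (by exact_mod_cast hlog)

/-- Elias-Fano high-bits bitmap: the map `i ↦ ⌊S i / 2^ℓ⌋ + i` is strictly
increasing and bounded by `2n`. -/
theorem eliasFano_bitmap_positions (n m : ℕ) (hn : 0 < n) (hnm : n ≤ m)
    (S : Fin n → ℕ) (hS : StrictMono S) (hSm : ∀ i, S i < m)
    (ℓ : ℕ) (hℓ : (ℓ : ℤ) = ⌈Real.logb 2 ((m : ℝ) / n)⌉) :
    StrictMono (fun i : Fin n => S i / 2 ^ ℓ + (i : ℕ)) ∧
      ∀ i : Fin n, S i / 2 ^ ℓ + (i : ℕ) < 2 * n :=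
  eliasFano_bitmap_positions_general n m S hS hSm ℓ hℓ
end

section
/- Let n, k, m, m₁, m₂ be positive real numbers with k < n and m₁ + m₂ ≤ m. Then k·log₂(m₁/k) + 2k + (n−k)·log₂(m₂/(n−k)) + 2(n−k) ≤ n·log₂(m/n) + 2n. In particular, splitting the Elias-Fano encoding of a set of n integers from a universe of size m into a first segment of k integers re-mapped into a universe of size m₁ and a second segment of n−k integers re-mapped into a universe of size m₂, with m₁ + m₂ ≤ m, does not increase the (real-valued) space bound n·log₂(m/n) + 2n. -/
/-!
The `2k + 2(n - k) = 2n` terms match exactly. With weights `k/n` and `(n - k)/n`, the remaining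
left-hand side is `n` times a convex combination of `log₂(m₁/k)` and `log₂(m₂/(n - k))`, so by
concavity of `log` (the two-term log-sum inequality) it is at most `n·log₂((m₁ + m₂)/n)`, and
`log` is monotone in `m₁ + m₂ ≤ m`.
-/

open Real

theorem mul_log_div_add_mul_log_div_le {a b x y : ℝ} (ha : 0 < a) (hb : 0 < b) (hx : 0 < x)
    (hy : 0 < y) :
    a * log (x / a) + b * log (y / b) ≤ (a + b) * log ((x + y) / (a + b)) := by
  have hab : 0 < a + b := add_pos ha hb
  have jensen := strictConcaveOn_log_Ioi.concaveOn.2 (Set.mem_Ioi.2 (div_pos hx ha))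
    (Set.mem_Ioi.2 (div_pos hy hb)) (div_pos ha hab).le (div_pos hb hab).le (by field_simp)
  have hmean : (a / (a + b)) • (x / a) + (b / (a + b)) • (y / b) = (x + y) / (a + b) := by
    simp only [smul_eq_mul]; field_simp
  rw [hmean, smul_eq_mul, smul_eq_mul] at jensen
  calc a * log (x / a) + b * log (y / b)
      = (a + b) * (a / (a + b) * log (x / a) + b / (a + b) * log (y / b)) := by field_simp
    _ ≤ (a + b) * log ((x + y) / (a + b)) := by gcongr

theorem mul_logb_div_add_mul_logb_div_le {β a b x y : ℝ} (hβ : 1 < β) (ha : 0 < a) (hb : 0 < b)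
    (hx : 0 < x) (hy : 0 < y) :
    a * logb β (x / a) + b * logb β (y / b) ≤ (a + b) * logb β ((x + y) / (a + b)) := by
  simp only [logb, ← mul_div_assoc, ← add_div]
  gcongr
  exacts [(log_pos hβ).le, mul_log_div_add_mul_log_div_le ha hb hx hy]

theorem eliasFano_split_two_general (n k m m₁ m₂ : ℝ) (hk : 0 < k)
    (hm₁ : 0 < m₁) (hm₂ : 0 < m₂) (hkn : k < n)
    (hsum : m₁ + m₂ ≤ m) :
    k * Real.logb 2 (m₁ / k) + 2 * k +
        (n - k) * Real.logb 2 (m₂ / (n - k)) + 2 * (n - k) ≤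
      n * Real.logb 2 (m / n) + 2 * n := by
  have hn : 0 < n := hk.trans hkn
  have hsplit := mul_logb_div_add_mul_logb_div_le one_lt_two hk (sub_pos.2 hkn) hm₁ hm₂
  rw [add_sub_cancel] at hsplit
  calc k * logb 2 (m₁ / k) + 2 * k + (n - k) * logb 2 (m₂ / (n - k)) + 2 * (n - k)
      = k * logb 2 (m₁ / k) + (n - k) * logb 2 (m₂ / (n - k)) + 2 * n := by ring
    _ ≤ n * logb 2 ((m₁ + m₂) / n) + 2 * n := by gcongr
    _ ≤ n * logb 2 (m / n) + 2 * n := by gcongr; exact one_lt_two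

/-- Splitting the Elias-Fano encoding into two re-mapped segments does not
increase the real-valued space bound `n·log₂(m/n) + 2n`. -/
theorem eliasFano_split_two (n k m m₁ m₂ : ℝ) (hn : 0 < n) (hk : 0 < k)
    (hm : 0 < m) (hm₁ : 0 < m₁) (hm₂ : 0 < m₂) (hkn : k < n)
    (hsum : m₁ + m₂ ≤ m) :
    k * Real.logb 2 (m₁ / k) + 2 * k +
        (n - k) * Real.logb 2 (m₂ / (n - k)) + 2 * (n - k) ≤
      n * Real.logb 2 (m / n) + 2 * n :=
  eliasFano_split_two_general n k m m₁ m₂ hk hm₁ hm₂ hkn hsum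
end

section
/- Let n, m be positive integers with n ≤ m. Then n·⌈log₂(m/n)⌉ + 2n ≤ log₂ C(m,n) + 3n, where C(m,n) is the binomial coefficient 'm choose n'. That is, the Elias-Fano space bound exceeds the information-theoretic minimum log₂ C(m,n) by at most 3n bits. -/
/-!
Comparing `C(m,n) = ∏_{i<n} (m-i)/(n-i)` factor by factor with `m/n` gives `(m/n)^n ≤ C(m,n)`,
so `n·log₂(m/n) ≤ log₂ C(m,n)`; rounding `log₂(m/n)` up costs at most `n` further bits.
-/

open Finset Nat

theorem Nat.pow_mul_factorial_le_pow_mul_descFactorial {n m : ℕ} (h : n ≤ m) :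
    m ^ n * n ! ≤ n ^ n * m.descFactorial n := by
  rw [← descFactorial_self, descFactorial_eq_prod_range, descFactorial_eq_prod_range]
  have pow_mul_prod (b : ℕ) (f : ℕ → ℕ) :
      b ^ n * ∏ i ∈ range n, f i = ∏ i ∈ range n, b * f i := by
    rw [← pow_card_mul_prod, card_range]
  rw [pow_mul_prod, pow_mul_prod]
  refine prod_le_prod' fun i _ => ?_
  rw [Nat.mul_sub, Nat.mul_sub, Nat.mul_comm m n]
  exact Nat.sub_le_sub_left (Nat.mul_le_mul_right i h) _

theorem Nat.pow_le_pow_mul_choose {n m : ℕ} (h : n ≤ m) : m ^ n ≤ n ^ n * m.choose n := by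
  have key := pow_mul_factorial_le_pow_mul_descFactorial h
  rw [descFactorial_eq_factorial_mul_choose, Nat.mul_left_comm, Nat.mul_comm (n !)] at key
  exact Nat.le_of_mul_le_mul_right key n.factorial_pos

theorem div_pow_le_choose {α : Type*} [Field α] [LinearOrder α] [IsStrictOrderedRing α]
    {n m : ℕ} (h : n ≤ m) : ((m : α) / n) ^ n ≤ m.choose n := by
  rw [div_pow, div_le_iff₀' (by exact_mod_cast Nat.pow_self_pos)]
  exact_mod_cast Nat.pow_le_pow_mul_choose h

/-- The Elias-Fano space bound exceeds the information-theoretic minimum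
`log₂ C(m,n)` by at most `3n` bits. -/
theorem eliasFano_vs_info_theoretic (n m : ℕ) (hn : 0 < n) (hnm : n ≤ m) :
    (n : ℝ) * (⌈Real.logb 2 ((m : ℝ) / n)⌉ : ℝ) + 2 * n ≤
      Real.logb 2 (m.choose n : ℝ) + 3 * n := by
  have hn_real : (0 : ℝ) < n := by exact_mod_cast hn
  have hm : (0 : ℝ) < m := by exact_mod_cast hn.trans_le hnm
  have hlog : n * Real.logb 2 ((m : ℝ) / n) ≤ Real.logb 2 (m.choose n : ℝ) := by
    rw [← Real.logb_pow]
    exact Real.logb_le_logb_of_le one_lt_two (by positivity) (div_pow_le_choose hnm)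
  have hceil : (n : ℝ) * ⌈Real.logb 2 ((m : ℝ) / n)⌉ ≤ n * (Real.logb 2 ((m : ℝ) / n) + 1) :=
    mul_le_mul_of_nonneg_left (Int.ceil_lt_add_one _).le hn_real.le
  linarith
end

section
/- Let n be a positive integer, let h : Fin n → ℕ be monotone nondecreasing, and define p(i) = h(i) + i (interpreting the index i as a natural number). Then for every natural number v, the position q = v + |{ i : h(i) ≤ v }| is not of the form p(i) for any i, and the number of natural numbers j < q that are not of the form p(i) equals exactly v; that is, q is the (v+1)-th smallest natural number outside the range of p. -/
open Finset in
/-- Select₀ in the Elias-Fano high-bits bitmap: the position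
`q = v + |{i : h i ≤ v}|` is a zero of the bitmap (not of the form `h i + i`),
and exactly `v` zeros precede it. -/
theorem eliasFano_select_zero (n : ℕ) (hn : 0 < n) (h : Fin n → ℕ)
    (hmono : Monotone h) :
    ∀ v : ℕ,
      (∀ i : Fin n,
        h i + (i : ℕ) ≠ v + (univ.filter fun i : Fin n => h i ≤ v).card) ∧
      ((range (v + (univ.filter fun i : Fin n => h i ≤ v).card)).filter
          fun j => ∀ i : Fin n, h i + (i : ℕ) ≠ j).card = v := by
  intro v
  set c := (univ.filter fun i : Fin n => h i ≤ v).card with hc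
  have key : ∀ i : Fin n, h i ≤ v ↔ (i : ℕ) < c := by
    intro i
    constructor
    · intro hi
      have hsub : Finset.Iic i ⊆ univ.filter fun j : Fin n => h j ≤ v := by
        intro j hj
        simp only [mem_filter, mem_univ, true_and]
        exact le_trans (hmono (mem_Iic.mp hj)) hi
      have hcard := Finset.card_le_card hsub
      rw [Fin.card_Iic] at hcard
      omega
    · intro hi
      by_contra hcon
      have hsub : (univ.filter fun j : Fin n => h j ≤ v) ⊆ Finset.Iio i := by
        intro j hj
        simp only [mem_filter, mem_univ, true_and] at hj
        rw [mem_Iio]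
        by_contra hji
        exact hcon (le_trans (hmono (not_lt.mp hji)) hj)
      have hcard := Finset.card_le_card hsub
      rw [Fin.card_Iio] at hcard
      omega
  have hlt : ∀ i : Fin n, h i + (i : ℕ) < v + c ↔ (i : ℕ) < c := by
    intro i
    by_cases hi : h i ≤ v
    · have h1 := (key i).mp hi
      constructor
      · intro _; exact h1
      · intro _; omega
    · have h1 : v + 1 ≤ h i := by omega
      have h2 : c ≤ (i : ℕ) := by
        by_contra hcon
        exact hi ((key i).mpr (by omega))
      constructor
      · intro hlt'; omega
      · intro hic; omega
  have hne : ∀ i : Fin n, h i + (i : ℕ) ≠ v + c := by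
    intro i
    by_cases hi : h i ≤ v
    · have h1 := (key i).mp hi
      omega
    · have h1 : v + 1 ≤ h i := by omega
      have h2 : c ≤ (i : ℕ) := by
        by_contra hcon
        exact hi ((key i).mpr (by omega))
      omega
  refine ⟨hne, ?_⟩
  have hsm : StrictMono (fun i : Fin n => h i + (i : ℕ)) := by
    intro a b hab
    have h1 : h a ≤ h b := hmono hab.le
    have h2 : (a : ℕ) < (b : ℕ) := hab
    simp only
    omega
  have himg : (range (v + c)).filter (fun j => ¬ ∀ i : Fin n, h i + (i : ℕ) ≠ j)
      = (univ.filter fun i : Fin n => h i ≤ v).image (fun i => h i + (i : ℕ)) := by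
    ext j
    simp only [mem_filter, mem_range, mem_image, mem_univ, true_and, not_forall,
      not_ne_iff]
    constructor
    · rintro ⟨hj, i, rfl⟩
      exact ⟨i, (key i).mpr ((hlt i).mp hj), rfl⟩
    · rintro ⟨i, hi, rfl⟩
      exact ⟨(hlt i).mpr ((key i).mp hi), i, rfl⟩
  have hones : ((range (v + c)).filter
      (fun j => ¬ ∀ i : Fin n, h i + (i : ℕ) ≠ j)).card = c := by
    rw [himg, Finset.card_image_of_injective _ hsm.injective]
  have htot := Finset.card_filter_add_card_filter_not
    (s := range (v + c)) (p := fun j => ∀ i : Fin n, h i + (i : ℕ) ≠ j)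
  rw [Finset.card_range] at htot
  omega
end

section
/- Let n be a positive integer, let h : Fin n → ℕ be monotone nondecreasing, and define p(i) = h(i) + i (interpreting the index i as a natural number). Then p is strictly increasing and, for every i, the number of natural numbers j < p(i) that are not of the form p(i′) for any i′ equals h(i). -/
open Finset in
/-- Select₁ in the Elias-Fano high-bits bitmap: the positions `p i = h i + i`
are strictly increasing and the number of zeros before `p i` equals `h i`. -/
theorem eliasFano_select_one (n : ℕ) (hn : 0 < n) (h : Fin n → ℕ)
    (hmono : Monotone h) :
    StrictMono (fun i : Fin n => h i + (i : ℕ)) ∧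
      ∀ i : Fin n,
        ((range (h i + (i : ℕ))).filter
            fun j => ∀ i' : Fin n, h i' + (i' : ℕ) ≠ j).card = h i := by
  set p : Fin n → ℕ := fun i => h i + (i : ℕ) with hp
  have hsm : StrictMono p := by
    intro a b hab
    have : h a ≤ h b := hmono hab.le
    have : (a : ℕ) < b := hab
    simp only [hp]
    omega
  refine ⟨hsm, fun i => ?_⟩
  have hsplit : (range (p i)).filter (fun j => ∀ i' : Fin n, p i' ≠ j) =
      range (p i) \ (univ.filter (· < i)).image p := by
    ext j
    simp only [mem_filter, mem_sdiff, mem_range, mem_image, mem_filter, mem_univ,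
      true_and]
    constructor
    · rintro ⟨hj, hall⟩
      exact ⟨hj, by rintro ⟨i', _, rfl⟩; exact hall i' rfl⟩
    · rintro ⟨hj, hnot⟩
      refine ⟨hj, fun i' hi' => hnot ⟨i', ?_, hi'⟩⟩
      by_contra hle
      have : p i ≤ p i' := hsm.le_iff_le.mpr (le_of_not_gt hle)
      omega
  have hsub : (univ.filter (· < i)).image p ⊆ range (p i) := by
    intro j hj
    simp only [mem_image, mem_filter, mem_univ, true_and] at hj
    obtain ⟨i', hi', rfl⟩ := hj
    exact mem_range.mpr (hsm hi')
  have hcard : ((univ.filter (· < i)).image p).card = (i : ℕ) := by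
    rw [Finset.card_image_of_injective _ hsm.injective]
    have : univ.filter (· < i) = Finset.Iio i := by
      ext x; simp
    rw [this, Fin.card_Iio]
  rw [hsplit, card_sdiff_of_subset hsub, card_range, hcard]
  simp only [hp]
  omega
end
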